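/- arXiv:1810.05548 — 5 statements merged into one kernel-verified Lean document; each statement's English description precedes it below -/
import Mathlib

section
/- Let m ≥ 2 be an integer and let f : [0,∞) → [0,∞) be continuous with f(0)=0, such that the function s ↦ f(s) + s^{2/(m-1)} is strictly increasing on [0,∞). Define F(s) = ∫₀^s f(t)·t dt and 2* = 2m/(m-1). Then for every s > 0 one has F(s) + s^{2*}/2* < (1/2)(f(s)·s² + s^{2*}). -/
open MeasureTheory

theorem stmt0 (m : ℕ) (hm : 2 ≤ m) (f : ℝ → ℝ)
    (hf_cont : ContinuousOn f (Set.Ici 0))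
    (hf_nonneg : ∀ s ∈ Set.Ici (0:ℝ), 0 ≤ f s)
    (hf0 : f 0 = 0)
    (hmono : StrictMonoOn (fun s : ℝ => f s + s ^ (2 / ((m:ℝ) - 1))) (Set.Ici 0))
    (F : ℝ → ℝ) (hF : ∀ s, F s = ∫ t in (0:ℝ)..s, f t * t)
    (twoStar : ℝ) (h2 : twoStar = 2 * m / ((m:ℝ) - 1)) :
    ∀ s > 0, F s + s ^ twoStar / twoStar < (1/2) * (f s * s^2 + s ^ twoStar) := by
  intro s hs
  set p : ℝ := 2 / ((m:ℝ) - 1) with hp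
  have hm1 : (1:ℝ) ≤ (m:ℝ) - 1 := by
    have : (2:ℝ) ≤ m := by exact_mod_cast hm
    linarith
  have hm1pos : (0:ℝ) < (m:ℝ) - 1 := by linarith
  have hppos : 0 < p := by positivity
  have hts : twoStar = p + 2 := by
    rw [h2, hp]
    field_simp
    ring
  have htspos : 0 < twoStar := by rw [hts]; linarith
  -- continuity of t ↦ t ^ p
  have hrpow_cont : Continuous fun t : ℝ => t ^ p := by
    rw [continuous_iff_continuousAt]
    intro x
    exact Real.continuousAt_rpow_const x p (Or.inr hppos.le)
  -- g = f + rpow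
  set g : ℝ → ℝ := fun t => f t + t ^ p with hg
  have hg_cont : ContinuousOn g (Set.Icc 0 s) :=
    (hf_cont.mono (Set.Icc_subset_Ici_self)).add hrpow_cont.continuousOn
  -- s ^ twoStar = s ^ p * s ^ 2
  have hsp : s ^ twoStar = s ^ p * s ^ 2 := by
    rw [hts, Real.rpow_add hs, ← Real.rpow_natCast s 2]
    norm_num
  -- pointwise on [0,s]: t^(p+1) = t^p * t
  have hpt : ∀ t ∈ Set.Icc (0:ℝ) s, t ^ (p+1) = t ^ p * t := by
    intro t ht
    rcases eq_or_lt_of_le ht.1 with h | h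
    · rw [← h, Real.zero_rpow (by positivity), mul_zero]
    · rw [Real.rpow_add h, Real.rpow_one]
  -- ∫₀^s t^p * t dt = s^twoStar / twoStar
  have hint1 : (∫ t in (0:ℝ)..s, t ^ p * t) = s ^ twoStar / twoStar := by
    have hcongr : (∫ t in (0:ℝ)..s, t ^ p * t) = ∫ t in (0:ℝ)..s, t ^ (p+1) :=
      intervalIntegral.integral_congr (fun t ht => by
        rw [Set.uIcc_of_le hs.le] at ht; exact (hpt t ht).symm)
    rw [hcongr, integral_rpow (Or.inl (by linarith))]
    rw [Real.zero_rpow (by positivity : p + 1 + 1 ≠ 0)]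
    rw [hts]
    ring_nf
  -- integrability pieces
  have hif : IntervalIntegrable (fun t => f t * t) volume 0 s :=
    (((hf_cont.mono Set.Icc_subset_Ici_self).mul continuousOn_id)).intervalIntegrable_of_Icc hs.le
  have hir : IntervalIntegrable (fun t => t ^ p * t) volume 0 s :=
    ((hrpow_cont.continuousOn.mul continuousOn_id)).intervalIntegrable_of_Icc hs.le
  -- LHS = ∫ g t * t
  have hLHS : F s + s ^ twoStar / twoStar = ∫ t in (0:ℝ)..s, g t * t := by
    rw [hF, ← hint1, ← intervalIntegral.integral_add hif hir]
    congr 1 with t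
    simp [hg]
    ring
  -- RHS = ∫ g s * t
  have hintt : (∫ t in (0:ℝ)..s, g s * t) = g s * (s^2 / 2) := by
    rw [intervalIntegral.integral_const_mul, integral_id]
    ring
  have hRHS : (1/2 : ℝ) * (f s * s^2 + s ^ twoStar) = ∫ t in (0:ℝ)..s, g s * t := by
    rw [hintt, hsp, hg]
    ring
  rw [hLHS, hRHS]
  -- strict inequality
  have hgle : ∀ t ∈ Set.Ioc (0:ℝ) s, g t * t ≤ g s * t := by
    intro t ht
    rcases eq_or_lt_of_le ht.2 with h | h
    · rw [h]
    · exact mul_le_mul_of_nonneg_right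
        (le_of_lt (hmono (Set.mem_Ici.2 ht.1.le) (Set.mem_Ici.2 hs.le) h)) ht.1.le
  have hglt : ∃ c ∈ Set.Icc (0:ℝ) s, g c * c < g s * c := by
    refine ⟨s/2, ⟨by positivity, by linarith⟩, ?_⟩
    exact mul_lt_mul_of_pos_right
      (hmono (Set.mem_Ici.2 (by positivity)) (Set.mem_Ici.2 hs.le) (by linarith)) (by positivity)
  exact intervalIntegral.integral_lt_integral_of_continuousOn_of_le_of_exists_lt hs
    (hg_cont.mul continuousOn_id) (continuousOn_const.mul continuousOn_id) hgle hglt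
end

section
/- Let m ≥ 2 and 2* = 2m/(m-1). For α > 0 and 2 < p < 2*, the function F(s) = α·s^p satisfies: (i) its derivative-based density f(s) := F'(s)/s = α·p·s^{p-2} is continuous on [0,∞) with f(0)=0; (ii) f(s)·s / F(s)^{(m+1)/(2m)} → 0 as s → ∞; (iii) lim_{ϱ→0⁺} ϱ^{m-1}/|ln ϱ|^{max{3-m,0}} · ∫₀^{1/ϱ} F( ϱ^{-(m-1)/2} / (1+r²)^{(m-1)/2} ) · r^{m-1} dr = ∞. -/
/-!
Everything is a power of `s`. In (ii), `f s * s / F s ^ q = C * s ^ (p - 1 - p * q)` with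
`q = (m + 1) / (2m)`, and `p - 1 < p * q` is exactly `p < 2*`. In (iii), homogeneity of `F`
pulls `ϱ ^ (-(m - 1) p / 2)` out of the integrand, leaving the weight
`(1 + r²) ^ (-(m - 1) p / 2) * r ^ (m - 1)`; its integral over `[0, 1/ϱ]` is at least its
(positive) integral over `[0, 1]`, so the expression dominates a multiple of
`ϱ ^ (-(m - 1)(p - 2) / 2) / |log ϱ| ^ μ`, and a negative power of `ϱ` beats any power of the
logarithm.
-/

open MeasureTheory Filter Real

lemma sub_one_lt_mul_of_lt_two_mul_div {m p : ℝ} (hm : 1 < m) (hp : p < 2 * m / (m - 1)) :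
    p - 1 < p * ((m + 1) / (2 * m)) := by
  have hm1 : 0 < m - 1 := by linarith
  have hpm : p * (m - 1) < 2 * m := (lt_div_iff₀ hm1).mp hp
  rw [← mul_div_assoc, lt_div_iff₀ (by linarith)]
  nlinarith

lemma tendsto_rpow_mul_div_rpow_atTop {α p q : ℝ} (hα : 0 < α) (hpq : p - 1 < p * q) (C : ℝ) :
    Tendsto (fun s : ℝ => C * s ^ (p - 2) * s / (α * s ^ p) ^ q) atTop (nhds 0) := by
  have hlim : Tendsto (fun s : ℝ => C / α ^ q * s ^ (p - 1 - p * q)) atTop (nhds 0) := by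
    simpa using (tendsto_rpow_neg_atTop (y := p * q - (p - 1)) (by linarith)).const_mul
      (C / α ^ q)
  refine hlim.congr' ?_
  filter_upwards [eventually_gt_atTop (0 : ℝ)] with s hs
  have hαq : 0 < α ^ q := rpow_pos_of_pos hα q
  have hspq : 0 < s ^ (p * q) := rpow_pos_of_pos hs _
  have hden : (α * s ^ p) ^ q = α ^ q * s ^ (p * q) := by
    rw [mul_rpow hα.le (rpow_nonneg hs.le p), ← rpow_mul hs.le]
  have hnum : s ^ (p - 1 - p * q) = s ^ (p - 2) * s * (s ^ (p * q))⁻¹ := by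
    rw [← rpow_add_one hs.ne', ← rpow_neg hs.le, ← rpow_add hs]
    ring_nf
  rw [hden, hnum]
  field_simp

lemma tendsto_rpow_neg_div_abs_log_rpow_nhdsGT_zero {c : ℝ} (hc : 0 < c) (μ : ℝ) :
    Tendsto (fun x : ℝ => x ^ (-c) / |log x| ^ μ) (nhdsWithin 0 (Set.Ioi 0)) atTop := by
  have hlittleO := (isLittleO_abs_log_rpow_rpow_nhdsGT_zero μ
    (neg_lt_zero.mpr hc)).tendsto_div_nhds_zero
  have hpos : ∀ᶠ x in nhdsWithin 0 (Set.Ioi 0), |log x| ^ μ / x ^ (-c) ∈ Set.Ioi (0 : ℝ) := by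
    filter_upwards [Ioo_mem_nhdsGT (zero_lt_one' ℝ)] with x hx
    exact div_pos (rpow_pos_of_pos (abs_pos.mpr (log_neg hx.1 hx.2).ne) _)
      (rpow_pos_of_pos hx.1 _)
  refine (tendsto_nhdsWithin_of_tendsto_nhds_of_eventually_within _ hlittleO
    hpos).inv_tendsto_nhdsGT_zero.congr fun x => ?_
  simp [inv_div]

noncomputable def radialWeight (b n r : ℝ) : ℝ := (1 + r ^ 2) ^ (-b) * r ^ n

section radialWeight

variable {b n : ℝ}

lemma continuous_radialWeight (hn : 0 ≤ n) : Continuous (radialWeight b n) :=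
  ((continuous_const.add (continuous_pow 2)).rpow_const fun x => Or.inl (by positivity : (1 : ℝ) + x ^ 2 ≠ 0)).mul
    (continuous_rpow_const hn)

lemma radialWeight_pos {r : ℝ} (hr : 0 < r) : 0 < radialWeight b n r :=
  mul_pos (rpow_pos_of_pos (by positivity) _) (rpow_pos_of_pos hr _)

lemma integral_radialWeight_pos (hn : 0 ≤ n) : 0 < ∫ r in (0 : ℝ)..1, radialWeight b n r :=
  intervalIntegral.intervalIntegral_pos_of_pos_on
    ((continuous_radialWeight hn).intervalIntegrable _ _)
    (fun _ hr => radialWeight_pos hr.1) one_pos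

lemma integral_radialWeight_le_of_one_le (hn : 0 ≤ n) {T : ℝ} (hT : 1 ≤ T) :
    ∫ r in (0 : ℝ)..1, radialWeight b n r ≤ ∫ r in (0 : ℝ)..T, radialWeight b n r := by
  refine intervalIntegral.integral_mono_interval le_rfl zero_le_one hT ?_
    ((continuous_radialWeight hn).intervalIntegrable _ _)
  filter_upwards [ae_restrict_mem measurableSet_Ioc] with r hr
  exact (radialWeight_pos hr.1).le

end radialWeight

lemma integral_rpow_scaled_profile {ϱ : ℝ} (hϱ : 0 < ϱ) (α a p n T : ℝ) :
    ∫ r in (0 : ℝ)..T, α * (ϱ ^ (-a) / (1 + r ^ 2) ^ a) ^ p * r ^ n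
      = α * ϱ ^ (-(a * p)) * ∫ r in (0 : ℝ)..T, radialWeight (a * p) n r := by
  rw [← intervalIntegral.integral_const_mul]
  refine intervalIntegral.integral_congr fun r _ => ?_
  have h1r : (0 : ℝ) < 1 + r ^ 2 := by positivity
  rw [div_rpow (rpow_nonneg hϱ.le _) (rpow_nonneg h1r.le _), ← rpow_mul hϱ.le,
    ← rpow_mul h1r.le, radialWeight, rpow_neg h1r.le, neg_mul]
  ring

lemma tendsto_rpow_mul_integral_rpow_scaled_profile {α a p n : ℝ} (hα : 0 < α) (hn : 0 ≤ n)
    (hnap : n < a * p) (μ : ℝ) :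
    Tendsto (fun ϱ : ℝ => ϱ ^ n / |log ϱ| ^ μ *
        ∫ r in (0 : ℝ)..(1 / ϱ), α * (ϱ ^ (-a) / (1 + r ^ 2) ^ a) ^ p * r ^ n)
      (nhdsWithin 0 (Set.Ioi 0)) atTop := by
  set K := ∫ r in (0 : ℝ)..1, radialWeight (a * p) n r
  have hK : 0 < K := integral_radialWeight_pos hn
  refine tendsto_atTop_mono' _ ?_ ((tendsto_rpow_neg_div_abs_log_rpow_nhdsGT_zero
    (sub_pos.mpr hnap) μ).const_mul_atTop (mul_pos hα hK))
  filter_upwards [Ioo_mem_nhdsGT (zero_lt_one' ℝ)] with ϱ ⟨hϱ0, hϱ1⟩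
  have hlog : 0 < |log ϱ| ^ μ := rpow_pos_of_pos (abs_pos.mpr (log_neg hϱ0 hϱ1).ne) _
  have hsplit : ϱ ^ (-(a * p - n)) = ϱ ^ n * ϱ ^ (-(a * p)) := by
    rw [← rpow_add hϱ0]
    ring_nf
  have hmono : K ≤ ∫ r in (0 : ℝ)..(1 / ϱ), radialWeight (a * p) n r :=
    integral_radialWeight_le_of_one_le hn (one_le_one_div hϱ0 hϱ1.le)
  calc α * K * (ϱ ^ (-(a * p - n)) / |log ϱ| ^ μ)
      = ϱ ^ n / |log ϱ| ^ μ * (α * ϱ ^ (-(a * p)) * K) := by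
        rw [hsplit]
        field_simp
    _ ≤ ϱ ^ n / |log ϱ| ^ μ *
        (α * ϱ ^ (-(a * p)) * ∫ r in (0 : ℝ)..(1 / ϱ), radialWeight (a * p) n r) := by
        gcongr
    _ = _ := by rw [integral_rpow_scaled_profile hϱ0]

theorem stmt3 (m : ℕ) (hm : 2 ≤ m) (α p : ℝ) (hα : 0 < α)
    (twoStar : ℝ) (h2 : twoStar = 2 * m / ((m:ℝ) - 1))
    (hp : 2 < p) (hp' : p < twoStar)
    (F f : ℝ → ℝ) (hF : ∀ s, F s = α * s ^ p)
    (hf : ∀ s, f s = α * p * s ^ (p - 2)) :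
    (ContinuousOn f (Set.Ici 0) ∧ f 0 = 0) ∧
    Tendsto (fun s : ℝ => f s * s / (F s) ^ (((m:ℝ) + 1) / (2 * (m:ℝ)))) atTop (nhds 0) ∧
    Tendsto (fun ϱ : ℝ =>
        ϱ ^ ((m:ℝ) - 1) / |Real.log ϱ| ^ (max (3 - (m:ℝ)) 0) *
          ∫ r in (0:ℝ)..(1/ϱ),
            F (ϱ ^ (-(((m:ℝ) - 1) / 2)) / (1 + r ^ 2) ^ (((m:ℝ) - 1) / 2)) * r ^ ((m:ℝ) - 1))
      (nhdsWithin 0 (Set.Ioi 0)) atTop := by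
  obtain rfl : F = fun s => α * s ^ p := funext hF
  obtain rfl : f = fun s => α * p * s ^ (p - 2) := funext hf
  subst h2
  have hM : (2 : ℝ) ≤ m := by exact_mod_cast hm
  refine ⟨⟨(continuous_const.mul (continuous_rpow_const (by linarith))).continuousOn, ?_⟩,
    tendsto_rpow_mul_div_rpow_atTop hα (sub_one_lt_mul_of_lt_two_mul_div (by linarith) hp') _,
    tendsto_rpow_mul_integral_rpow_scaled_profile hα (by linarith) (by nlinarith) _⟩
  simp [zero_rpow (by linarith : p - 2 ≠ 0)]
end

section
/- Let m ≥ 2, 2* = 2m/(m-1), and let f : [0,∞) → [0,∞) be continuous with f(0)=0 such that f(s)·s / F(s)^{(m+1)/(2m)} → 0 as s → ∞, where F(s) = ∫₀^s f(t) t dt. Then for every ε > 0 there exists C_ε > 0 such that F(s) ≤ C_ε + ε·s^{2*} and f(s) ≤ C_ε + ε·s^{2*-2} for all s ≥ 0. In particular f(s)/s^{2/(m-1)} → 0 as s → ∞. -/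
open MeasureTheory Filter Asymptotics Set Topology

/-!
Write `r = 2*`, `p = (r - 1) / r` and `q = 1 - p = 1 / r`. The hypothesis says that
`F' s = f s * s ≤ δ F(s)^p` for large `s`, for every `δ > 0`; hence `(F^q)' ≤ δ q`, so `F^q`
grows sublinearly, i.e. `F = o(s^r)`, and then `f s * s ≤ F^p = o(s^(r-1))`. Continuity on
compact intervals turns these little-o estimates into the bounds `C_ε + ε s^…` on `[0, ∞)`.
-/

theorem rpow_sub_rpow_le_of_hasDerivAt_le {G g : ℝ → ℝ} {S δ q : ℝ} (hq : 0 ≤ q)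
    (hderiv : ∀ t ≥ S, HasDerivAt G (g t) t) (hpos : ∀ t ≥ S, 0 < G t)
    (hg : ∀ t ≥ S, g t ≤ δ * G t ^ (1 - q)) {s : ℝ} (hs : S ≤ s) :
    G s ^ q - G S ^ q ≤ δ * q * (s - S) := by
  have hderiv_rpow : ∀ t ≥ S, HasDerivAt (fun u => G u ^ q) (g t * q * G t ^ (q - 1)) t :=
    fun t ht => (hderiv t ht).rpow_const (Or.inl (hpos t ht).ne')
  refine (convex_Ici S).image_sub_le_mul_sub_of_deriv_le
    (fun t ht => (hderiv_rpow t ht).continuousAt.continuousWithinAt)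
    (fun t ht => (hderiv_rpow t (interior_subset ht)).differentiableAt.differentiableWithinAt)
    (fun t ht => ?_) S self_mem_Ici s hs hs
  have ht : S ≤ t := interior_subset ht
  have hGt := hpos t ht
  rw [(hderiv_rpow t ht).deriv]
  calc g t * q * G t ^ (q - 1) ≤ δ * G t ^ (1 - q) * q * G t ^ (q - 1) := by
        gcongr
        exact hg t ht
    _ = δ * q * (G t ^ (1 - q) * G t ^ (q - 1)) := by ring
    _ = δ * q := by rw [← Real.rpow_add hGt]; norm_num

theorem isLittleO_rpow_id_of_hasDerivAt {G g : ℝ → ℝ} {q : ℝ} (hq : 0 < q)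
    (hderiv : ∀ᶠ t in atTop, HasDerivAt G (g t) t) (hpos : ∀ᶠ t in atTop, 0 < G t)
    (hg : g =o[atTop] fun t => G t ^ (1 - q)) :
    (fun s => G s ^ q) =o[atTop] id := by
  refine IsLittleO.of_bound fun c hc => ?_
  obtain ⟨S, hS⟩ := eventually_atTop.1 <| (eventually_ge_atTop 0).and <| hderiv.and <|
    hpos.and <| hg.bound (div_pos hc (mul_pos two_pos hq))
  have hS0 : 0 ≤ S := (hS S le_rfl).1
  have hGpos : ∀ t ≥ S, 0 < G t := fun t ht => (hS t ht).2.2.1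
  have hgS : ∀ t ≥ S, g t ≤ c / (2 * q) * G t ^ (1 - q) := fun t ht => by
    have h := (hS t ht).2.2.2
    rw [Real.norm_of_nonneg (Real.rpow_nonneg (hGpos t ht).le _)] at h
    exact (Real.le_norm_self _).trans h
  filter_upwards [eventually_ge_atTop S, eventually_ge_atTop (G S ^ q / (c / 2))]
    with s hsS hsA
  rw [div_le_iff₀ (half_pos hc)] at hsA
  have hgrowth := rpow_sub_rpow_le_of_hasDerivAt_le hq.le (fun t ht => (hS t ht).2.1) hGpos hgS hsS
  have hslope : c / (2 * q) * q * (s - S) = c / 2 * (s - S) := by field_simp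
  rw [Real.norm_of_nonneg (Real.rpow_nonneg (hGpos s hsS).le _), id,
    Real.norm_of_nonneg (hS0.trans hsS)]
  linarith [mul_nonneg hc.le hS0]

theorem hasDerivAt_integral_of_continuousOn_Ici {f : ℝ → ℝ} {a s : ℝ}
    (hf : ContinuousOn f (Ici a)) (hs : a < s) :
    HasDerivAt (fun u => ∫ t in a..u, f t) (f s) s :=
  intervalIntegral.integral_hasDerivAt_right
    ((hf.mono (uIcc_of_le hs.le ▸ Icc_subset_Ici_self)).intervalIntegrable)
    (hf.mono Ioi_subset_Ici_self |>.stronglyMeasurableAtFilter isOpen_Ioi s hs)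
    (hf.continuousAt (Ici_mem_nhds hs))

theorem continuousOn_integral_Icc_of_continuousOn_Ici {f : ℝ → ℝ} {a : ℝ}
    (hf : ContinuousOn f (Ici a)) (T : ℝ) :
    ContinuousOn (fun u => ∫ t in a..u, f t) (Icc a T) :=
  have hIcc : uIcc a (max a T) = Icc a (max a T) := uIcc_of_le (le_max_left a T)
  (intervalIntegral.continuousOn_primitive_interval'
    (hf.mono (hIcc ▸ Icc_subset_Ici_self)).intervalIntegrable left_mem_uIcc).mono
    (hIcc ▸ Icc_subset_Icc_right (le_max_right a T))

theorem isLittleO_add_one_rpow_of_tendsto_div_rpow {G g : ℝ → ℝ} {p : ℝ} (hp : 0 < p)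
    (hG : ∀ t ≥ 0, 0 ≤ G t) (hderiv : ∀ t > 0, HasDerivAt G (g t) t)
    (h : Tendsto (fun t => g t / G t ^ p) atTop (𝓝 0)) :
    g =o[atTop] fun t => (G t + 1) ^ p := by
  -- A zero of `G` is a local minimum, where `g = G'` vanishes too.
  have hvanish : ∀ t > 0, G t ^ p = 0 → g t = 0 := fun t ht hGt => by
    have hmin : IsLocalMin G t := by
      filter_upwards [Ioi_mem_nhds ht] with u hu
      rw [(Real.rpow_eq_zero (hG t ht.le) hp.ne').1 hGt]
      exact hG u (le_of_lt hu)
    exact hmin.hasDerivAt_eq_zero (hderiv t ht)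
  refine ((isLittleO_iff_tendsto' ?_).2 h).trans_isBigO (IsBigO.of_bound 1 ?_)
  · filter_upwards [eventually_gt_atTop 0] with t ht using hvanish t ht
  · filter_upwards [eventually_ge_atTop 0] with t ht
    have h0 := hG t ht
    rw [Real.norm_of_nonneg (by positivity), Real.norm_of_nonneg (by positivity), one_mul]
    gcongr
    linarith

theorem isLittleO_of_tendsto_div_primitive_rpow {f F : ℝ → ℝ} {r : ℝ} (hr : 1 < r)
    (hf : ContinuousOn f (Ici 0)) (hf_nonneg : ∀ s ≥ 0, 0 ≤ f s)
    (hF : ∀ s, F s = ∫ t in 0..s, f t * t)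
    (h : Tendsto (fun s => f s * s / F s ^ ((r - 1) / r)) atTop (𝓝 0)) :
    F =o[atTop] (· ^ r) ∧ f =o[atTop] (· ^ (r - 2)) := by
  have hr0 : 0 < r := by linarith
  have hF_nonneg : ∀ s ≥ 0, 0 ≤ F s := fun s hs => (hF s).symm ▸
    intervalIntegral.integral_nonneg hs fun t ht => mul_nonneg (hf_nonneg t ht.1) ht.1
  have hderiv : ∀ s > 0, HasDerivAt F (f s * s) s := fun s hs => by
    rw [show F = _ from funext hF]
    exact hasDerivAt_integral_of_continuousOn_Ici (hf.mul continuousOn_id) hs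
  have hsmall := isLittleO_add_one_rpow_of_tendsto_div_rpow (div_pos (by linarith) hr0)
    hF_nonneg hderiv h
  -- `F + 1` rather than `F`: it stays positive, so its `1 / r`-th power is differentiable.
  have hsublin : (fun s => (F s + 1) ^ (1 / r)) =o[atTop] id := by
    refine isLittleO_rpow_id_of_hasDerivAt (g := fun s => f s * s) (one_div_pos.2 hr0) ?_ ?_ ?_
    · filter_upwards [eventually_gt_atTop 0] with s hs using (hderiv s hs).add_const 1
    · filter_upwards [eventually_ge_atTop 0] with s hs using by linarith [hF_nonneg s hs]
    · rwa [one_sub_div hr0.ne']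
  have hpow : ∀ e > 0, (fun s => (F s + 1) ^ (e / r)) =o[atTop] (· ^ e) := fun e he => by
    refine (hsublin.rpow he ?_).congr' ?_ EventuallyEq.rfl
    · filter_upwards [eventually_ge_atTop 0] with s hs using hs
    · filter_upwards [eventually_ge_atTop 0] with s hs
      rw [← Real.rpow_mul (by linarith [hF_nonneg s hs]), one_div_mul_eq_div]
  constructor
  · refine (IsBigO.of_bound 1 ?_).trans_isLittleO
      (by simpa [div_self hr0.ne'] using hpow r hr0)
    filter_upwards [eventually_ge_atTop 0] with s hs
    have := hF_nonneg s hs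
    rw [Real.norm_of_nonneg this, Real.norm_of_nonneg (by linarith), one_mul]
    linarith
  · have hfs : (fun s => f s * s) =o[atTop] (· ^ (r - 1)) := hsmall.trans (hpow _ (by linarith))
    refine (hfs.mul_isBigO (isBigO_refl (fun s : ℝ => s⁻¹) atTop)).congr' ?_ ?_
    · filter_upwards [eventually_gt_atTop 0] with s hs
      field_simp
    · filter_upwards [eventually_gt_atTop 0] with s hs
      rw [← Real.rpow_neg_one, ← Real.rpow_add hs]
      ring_nf

theorem exists_pos_forall_le_add_mul_rpow {g : ℝ → ℝ} {k : ℝ}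
    (hg : ∀ T, ContinuousOn g (Icc 0 T)) (hgo : g =o[atTop] (· ^ k)) {ε : ℝ} (hε : 0 < ε) :
    ∃ C > 0, ∀ s ≥ 0, g s ≤ C + ε * s ^ k := by
  obtain ⟨T, hT⟩ := eventually_atTop.1 <| (eventually_ge_atTop 0).and (hgo.bound hε)
  obtain ⟨M, hM⟩ := isCompact_Icc.bddAbove_image (hg T)
  refine ⟨max M 0 + 1, by positivity, fun s hs => ?_⟩
  have hsk : 0 ≤ ε * s ^ k := by positivity
  rcases le_total s T with hsT | hTs
  · have := hM (mem_image_of_mem g ⟨hs, hsT⟩)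
    linarith [le_max_left M 0]
  · have h := (hT s hTs).2
    rw [Real.norm_of_nonneg (Real.rpow_nonneg hs _)] at h
    linarith [Real.le_norm_self (g s), le_max_right M 0]

theorem stmt4_general (m : ℕ) (hm : 2 ≤ m)
    (twoStar : ℝ) (h2 : twoStar = 2 * m / ((m:ℝ) - 1))
    (f : ℝ → ℝ)
    (hf_cont : ContinuousOn f (Set.Ici 0))
    (hf_nonneg : ∀ s ∈ Set.Ici (0:ℝ), 0 ≤ f s)
    (F : ℝ → ℝ) (hF : ∀ s, F s = ∫ t in (0:ℝ)..s, f t * t)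
    (hf4 : Tendsto (fun s : ℝ => f s * s / (F s) ^ (((m:ℝ) + 1) / (2 * (m:ℝ)))) atTop (nhds 0)) :
    (∀ ε > 0, ∃ C > 0, ∀ s ≥ (0:ℝ),
        F s ≤ C + ε * s ^ twoStar ∧ f s ≤ C + ε * s ^ (twoStar - 2)) ∧
    Tendsto (fun s : ℝ => f s / s ^ (2 / ((m:ℝ) - 1))) atTop (nhds 0) := by
  have hm1 : (0:ℝ) < m - 1 := by
    have : (2:ℝ) ≤ m := by exact_mod_cast hm
    linarith
  have htwoStar : 1 < twoStar := by rw [h2, lt_div_iff₀ hm1]; linarith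
  have hexp : ((m:ℝ) + 1) / (2 * m) = (twoStar - 1) / twoStar := by
    rw [h2]; field_simp; ring
  have hexp' : 2 / ((m:ℝ) - 1) = twoStar - 2 := by
    rw [h2]; field_simp; ring
  rw [hexp] at hf4
  obtain ⟨hFo, hfo⟩ := isLittleO_of_tendsto_div_primitive_rpow htwoStar hf_cont hf_nonneg hF hf4
  refine ⟨fun ε hε => ?_, hexp' ▸ hfo.tendsto_div_nhds_zero⟩
  have hFcont : ∀ T, ContinuousOn F (Icc 0 T) := fun T => by
    rw [show F = _ from funext hF]
    exact continuousOn_integral_Icc_of_continuousOn_Ici (hf_cont.mul continuousOn_id) T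
  obtain ⟨C₁, hC₁, hF_le⟩ := exists_pos_forall_le_add_mul_rpow hFcont hFo hε
  obtain ⟨C₂, -, hf_le⟩ :=
    exists_pos_forall_le_add_mul_rpow (fun T => hf_cont.mono Icc_subset_Ici_self) hfo hε
  refine ⟨max C₁ C₂, lt_max_of_lt_left hC₁, fun s hs => ⟨?_, ?_⟩⟩
  · linarith [hF_le s hs, le_max_left C₁ C₂]
  · linarith [hf_le s hs, le_max_right C₁ C₂]

theorem stmt4 (m : ℕ) (hm : 2 ≤ m)
    (twoStar : ℝ) (h2 : twoStar = 2 * m / ((m:ℝ) - 1))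
    (f : ℝ → ℝ)
    (hf_cont : ContinuousOn f (Set.Ici 0))
    (hf_nonneg : ∀ s ∈ Set.Ici (0:ℝ), 0 ≤ f s)
    (hf0 : f 0 = 0)
    (F : ℝ → ℝ) (hF : ∀ s, F s = ∫ t in (0:ℝ)..s, f t * t)
    (hf4 : Tendsto (fun s : ℝ => f s * s / (F s) ^ (((m:ℝ) + 1) / (2 * (m:ℝ)))) atTop (nhds 0)) :
    (∀ ε > 0, ∃ C > 0, ∀ s ≥ (0:ℝ),
        F s ≤ C + ε * s ^ twoStar ∧ f s ≤ C + ε * s ^ (twoStar - 2)) ∧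
    Tendsto (fun s : ℝ => f s / s ^ (2 / ((m:ℝ) - 1))) atTop (nhds 0) :=
  stmt4_general m hm twoStar h2 f hf_cont hf_nonneg F hF hf4
end

section
/- Let E be a Hilbert space decomposed orthogonally as E = E⁺ ⊕ E⁰ ⊕ E⁻ with dim E⁰ < ∞, and let 𝒦 : E → ℝ be a strictly convex C¹ functional with 𝒦(0) = 0, 𝒦(ψ) > 0 and 𝒦'(ψ)[ψ] > 2𝒦(ψ) for all ψ ≠ 0. Suppose moreover 𝒦(ψ) ≥ C‖ψ‖^{2*} − ε‖ψ‖² on the subspace ℝφ ⊕ E⁰ ⊕ E⁻ for some 2* > 2, and 𝒦(ψ) = o(‖ψ‖²) as ψ → 0. Then for any unit vector φ ∈ E⁺, the functional L(ψ) = (1/2)(‖ψ⁺‖² − ‖ψ⁻‖²) − 𝒦(ψ) restricted to Ê(φ) := {tφ + χ : t ≥ 0, χ ∈ E⁰ ⊕ E⁻} attains a positive supremum, and L ≤ 0 on Ê(φ) outside a bounded set. -/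
/-!
Write a point of `Ê(φ)` as `t φ + v + w` with `t ≥ 0`, `v ∈ E⁰`, `w ∈ E⁻`, so that
`L = t²/2 - (‖w‖²/2 + 𝒦 (t φ + v + w))`. For fixed `(t, v)` the bracket is `1`-strongly convex
in `w`, so it attains its minimum on the closed subspace `E⁻` of the Hilbert space `E`, and the
minimum value is a convex, hence continuous, function of `(t, v)` in the finite-dimensional space
`ℝ × E⁰`. Maximizing `L` over `Ê(φ)` therefore reduces to maximizing a continuous function on a
closed subset of `ℝ × E⁰`. A maximum exists because `L ≤ 0` far out on `Ê(φ)` (coercivity with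
`2* > 2` and `ε < 1/2`), while `L (t φ) > 0` for small `t > 0` since `𝒦 = o(‖ψ‖²)`.
-/

open Filter Topology Set

structure IsOrthogonalTriple {E : Type*} [NormedAddCommGroup E] [InnerProductSpace ℝ E]
    (P Q R : E →L[ℝ] E) : Prop where
  add_add_apply : ∀ x, P x + Q x + R x = x
  inner_fst_snd : ∀ x y, inner ℝ (P x) (Q y) = (0 : ℝ)
  inner_fst_thd : ∀ x y, inner ℝ (P x) (R y) = (0 : ℝ)
  inner_snd_thd : ∀ x y, inner ℝ (Q x) (R y) = (0 : ℝ)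

namespace IsOrthogonalTriple

variable {E : Type*} [NormedAddCommGroup E] [InnerProductSpace ℝ E] {P Q R : E →L[ℝ] E}

theorem rotate (h : IsOrthogonalTriple P Q R) : IsOrthogonalTriple Q R P where
  add_add_apply x := (add_rotate (P x) (Q x) (R x)).symm.trans (h.add_add_apply x)
  inner_fst_snd := h.inner_snd_thd
  inner_fst_thd x y := by rw [real_inner_comm]; exact h.inner_fst_snd y x
  inner_snd_thd x y := by rw [real_inner_comm]; exact h.inner_fst_thd y x

theorem apply_eq_zero_of_forall_inner_eq_zero (h : IsOrthogonalTriple P Q R) {y : E}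
    (hy : ∀ x, inner ℝ (P x) y = (0 : ℝ)) : P y = 0 := by
  have hPy : P y = y - Q y - R y := by
    rw [sub_sub, eq_sub_iff_add_eq, ← add_assoc]; exact h.add_add_apply y
  rw [← inner_self_eq_zero (𝕜 := ℝ)]
  nth_rw 2 [hPy]
  rw [inner_sub_right, inner_sub_right, hy, h.inner_fst_snd, h.inner_fst_thd, sub_zero, sub_zero]

theorem apply_snd (h : IsOrthogonalTriple P Q R) (x : E) : P (Q x) = 0 :=
  h.apply_eq_zero_of_forall_inner_eq_zero fun z => h.inner_fst_snd z x

theorem apply_thd (h : IsOrthogonalTriple P Q R) (x : E) : P (R x) = 0 :=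
  h.apply_eq_zero_of_forall_inner_eq_zero fun z => h.inner_fst_thd z x

theorem apply_fst (h : IsOrthogonalTriple P Q R) (x : E) : P (P x) = P x := by
  simpa only [h.rotate.apply_thd, h.rotate.rotate.apply_snd, add_zero] using h.add_add_apply (P x)

theorem norm_sq_eq (h : IsOrthogonalTriple P Q R) (x : E) :
    ‖x‖ ^ 2 = ‖P x‖ ^ 2 + ‖Q x‖ ^ 2 + ‖R x‖ ^ 2 := by
  conv_lhs => rw [← h.add_add_apply x]
  rw [norm_add_sq_real, norm_add_sq_real, inner_add_left, h.inner_fst_snd, h.inner_fst_thd,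
    h.inner_snd_thd]
  ring

theorem norm_fst_le (h : IsOrthogonalTriple P Q R) (x : E) : ‖P x‖ ≤ ‖x‖ :=
  le_of_pow_le_pow_left₀ two_ne_zero (norm_nonneg x) <| by
    nlinarith [h.norm_sq_eq x, sq_nonneg ‖Q x‖, sq_nonneg ‖R x‖]

end IsOrthogonalTriple

theorem StrongConvexOn.exists_isMinOn {E : Type*} [NormedAddCommGroup E] [NormedSpace ℝ E]
    [CompleteSpace E] {s : Set E} {m : ℝ} {g : E → ℝ} (hg : StrongConvexOn s m g) (hm : 0 < m)
    (hs : IsClosed s) (hne : s.Nonempty) (hcont : ContinuousOn g s) (hbdd : BddBelow (g '' s)) :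
    ∃ x ∈ s, IsMinOn g s x := by
  set μ := sInf (g '' s)
  have hμ : ∀ y ∈ s, μ ≤ g y := fun y hy => csInf_le hbdd (mem_image_of_mem g hy)
  have hmid : ∀ x ∈ s, ∀ y ∈ s, m / 8 * ‖x - y‖ ^ 2 ≤ (g x + g y) / 2 - μ := by
    intro x hx y hy
    have hconv := hg.2 hx hy (by norm_num : (0 : ℝ) ≤ 1 / 2) (by norm_num : (0 : ℝ) ≤ 1 / 2)
      (by norm_num)
    have hinf := hμ _ (hg.1 hx hy (by norm_num : (0 : ℝ) ≤ 1 / 2)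
      (by norm_num : (0 : ℝ) ≤ 1 / 2) (by norm_num))
    simp only [smul_eq_mul] at hconv
    linarith
  obtain ⟨u, hanti, hlim, hmem⟩ := exists_seq_tendsto_sInf (hne.image g) hbdd
  choose x hxs hgx using hmem
  have hlim' : Tendsto u atTop (𝓝 μ) := hlim
  have hcauchy : CauchySeq x := by
    refine cauchySeq_of_le_tendsto_0' (fun n => √(8 / m * (u n - μ))) (fun n k hnk => ?_) ?_
    · have hxy := hmid _ (hxs n) _ (hxs k)
      rw [hgx, hgx] at hxy
      have hu := hanti hnk
      rw [dist_eq_norm]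
      refine Real.le_sqrt_of_sq_le ?_
      rw [div_mul_eq_mul_div, le_div_iff₀ hm]
      linarith
    · simpa using ((hlim'.sub_const μ).const_mul (8 / m)).sqrt
  obtain ⟨w, hw⟩ := cauchySeq_tendsto_of_complete hcauchy
  have hws : w ∈ s := hs.mem_of_tendsto hw (Eventually.of_forall hxs)
  have hgw : g w = μ := by
    refine tendsto_nhds_unique ((hcont w hws).tendsto.comp ?_) (hlim'.congr fun n => (hgx n).symm)
    exact tendsto_nhdsWithin_iff.2 ⟨hw, Eventually.of_forall hxs⟩
  exact ⟨w, hws, fun y hy => hgw ▸ hμ y hy⟩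

section PartialMinimum

variable {X W : Type*}

theorem ConvexOn.partialMinimum [AddCommGroup X] [Module ℝ X] [AddCommGroup W] [Module ℝ W]
    {G : X → W → ℝ} (hG : ConvexOn ℝ univ fun p : X × W => G p.1 p.2) {N : Set W}
    (hN : Convex ℝ N) {m : X → W} (hmN : ∀ x, m x ∈ N) (hm : ∀ x, IsMinOn (G x) N (m x)) :
    ConvexOn ℝ univ fun x => G x (m x) := by
  refine ⟨convex_univ, fun x _ y _ a b ha hb hab => ?_⟩
  calc G (a • x + b • y) (m (a • x + b • y))
      ≤ G (a • x + b • y) (a • m x + b • m y) := hm _ (hN (hmN x) (hmN y) ha hb hab)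
    _ ≤ a • G x (m x) + b • G y (m y) :=
      hG.2 (mem_univ (x, m x)) (mem_univ (y, m y)) ha hb hab

theorem exists_forall_sub_le_of_isMinOn [NormedAddCommGroup X] [NormedSpace ℝ X]
    [FiniteDimensional ℝ X] [AddCommGroup W] [Module ℝ W]
    {G : X → W → ℝ} (hG : ConvexOn ℝ univ fun p : X × W => G p.1 p.2) {N : Set W}
    (hN : Convex ℝ N) {m : X → W} (hmN : ∀ x, m x ∈ N) (hm : ∀ x, IsMinOn (G x) N (m x))
    {q : X → ℝ} (hq : Continuous q) {S : Set X} (hS : IsClosed S) {x₀ : X} (hx₀ : x₀ ∈ S)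
    {w₀ : W} (hw₀ : w₀ ∈ N) {R : ℝ}
    (hR : ∀ x ∈ S, R ≤ ‖x‖ → ∀ w ∈ N, q x - G x w ≤ q x₀ - G x₀ w₀) :
    ∃ x ∈ S, ∀ y ∈ S, ∀ w ∈ N, q y - G y w ≤ q x - G x (m x) := by
  have hcont : Continuous fun x => q x - G x (m x) :=
    hq.sub <| continuousOn_univ.1 <| (hG.partialMinimum hN hmN hm).continuousOn isOpen_univ
  have hfar : ∀ᶠ x in cocompact X ⊓ 𝓟 S, q x - G x (m x) ≤ q x₀ - G x₀ (m x₀) := by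
    filter_upwards [(tendsto_norm_cocompact_atTop.eventually_ge_atTop R).filter_mono inf_le_left,
      inf_le_right (a := cocompact X) (mem_principal_self S)] with x hxR hxS
    exact (hR x hxS hxR _ (hmN x)).trans (sub_le_sub_left (hm x₀ hw₀) _)
  obtain ⟨x, hxS, hxmax⟩ := hcont.continuousOn.exists_isMaxOn' hS hx₀ hfar
  exact ⟨x, hxS, fun y hy w hw => (sub_le_sub_left (hm y hw) _).trans (hxmax hy)⟩

end PartialMinimum

section Minimizers

variable {E : Type*} [NormedAddCommGroup E] [InnerProductSpace ℝ E] {K : E → ℝ}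

theorem ConvexOn.norm_sq_div_two_add_comp {X : Type*} [AddCommGroup X] [Module ℝ X]
    (hK : ConvexOn ℝ univ K) (A : X →ₗ[ℝ] E) :
    ConvexOn ℝ univ fun p : X × E => ‖p.2‖ ^ 2 / 2 + K (A p.1 + p.2) := by
  have hsq : ConvexOn ℝ univ fun w : E => ‖w‖ ^ 2 / 2 := by
    simpa [div_eq_inv_mul] using
      (convexOn_univ_norm.pow (fun _ _ => norm_nonneg _) 2).smul (by norm_num : (0 : ℝ) ≤ 1 / 2)
  exact (hsq.comp_linearMap (LinearMap.snd ℝ X E)).add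
    (hK.comp_linearMap (A.coprod LinearMap.id))

theorem exists_isMinOn_norm_sq_div_two_add [CompleteSpace E] (hK : ConvexOn ℝ univ K)
    (hKc : Continuous K) (hK0 : ∀ ψ, 0 ≤ K ψ) {N : Submodule ℝ E} (hN : IsClosed (N : Set E))
    (c : E) : ∃ w ∈ N, IsMinOn (fun w => ‖w‖ ^ 2 / 2 + K (c + w)) N w := by
  refine StrongConvexOn.exists_isMinOn ?_ one_pos hN ⟨0, N.zero_mem⟩ (by fun_prop)
    ⟨0, by rintro _ ⟨w, -, rfl⟩; exact add_nonneg (by positivity) (hK0 _)⟩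
  rw [strongConvexOn_iff_convex]
  refine ((hK.translate_right c).subset (subset_univ _) N.convex).congr fun w _ => ?_
  simp only [Function.comp_apply]
  ring

end Minimizers

section Action

variable {E : Type*} [NormedAddCommGroup E] [InnerProductSpace ℝ E]

/-- The set `Ê(φ)`; the condition `Pp χ = 0` says `χ ∈ E⁰ ⊕ E⁻`. -/
def halfSpace (Pp : E →L[ℝ] E) (φ : E) : Set E :=
  {ψ | ∃ t : ℝ, 0 ≤ t ∧ ∃ χ : E, Pp χ = 0 ∧ ψ = t • φ + χ}

noncomputable def action (Pp Pn : E →L[ℝ] E) (K : E → ℝ) (ψ : E) : ℝ :=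
  (1 / 2) * (‖Pp ψ‖ ^ 2 - ‖Pn ψ‖ ^ 2) - K ψ

theorem exists_forall_sq_le_mul_rpow {C s : ℝ} (hC : 0 < C) (hs : 2 < s) :
    ∃ R, ∀ r, R ≤ r → r ^ 2 ≤ C * r ^ s := by
  obtain ⟨R, hR⟩ := eventually_atTop.1 <|
    ((tendsto_rpow_atTop (by linarith : 0 < s - 2)).eventually_ge_atTop C⁻¹).and
      (eventually_gt_atTop 0)
  refine ⟨R, fun r hr => ?_⟩
  obtain ⟨hrs, hr0⟩ := hR r hr
  have hsplit : r ^ s = r ^ 2 * r ^ (s - 2) := by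
    rw [← Real.rpow_natCast, ← Real.rpow_add hr0]; norm_num
  rw [hsplit, mul_left_comm]
  nlinarith [mul_inv_cancel₀ hC.ne', mul_le_mul_of_nonneg_left hrs hC.le, sq_nonneg r]

theorem exists_action_nonpos_of_norm_ge {Pp Pn : E →L[ℝ] E} {K : E → ℝ} {C s ε : ℝ}
    (hPp : ∀ ψ, ‖Pp ψ‖ ≤ ‖ψ‖) (hC : 0 < C) (hs : 2 < s) (hε : ε ≤ 1 / 2) :
    ∃ R, ∀ ψ, R ≤ ‖ψ‖ → C * ‖ψ‖ ^ s - ε * ‖ψ‖ ^ 2 ≤ K ψ → action Pp Pn K ψ ≤ 0 := by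
  obtain ⟨R, hR⟩ := exists_forall_sq_le_mul_rpow hC hs
  refine ⟨R, fun ψ hψ hK => ?_⟩
  have hPp_sq : ‖Pp ψ‖ ^ 2 ≤ ‖ψ‖ ^ 2 := pow_le_pow_left₀ (norm_nonneg _) (hPp ψ) 2
  have hε_sq : ε * ‖ψ‖ ^ 2 ≤ 1 / 2 * ‖ψ‖ ^ 2 := mul_le_mul_of_nonneg_right hε (sq_nonneg _)
  unfold action
  nlinarith [hR _ hψ, sq_nonneg ‖Pn ψ‖]

theorem exists_pos_action_smul_pos {Pp Pn : E →L[ℝ] E} {K : E → ℝ} {φ : E}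
    (hK : K =o[𝓝 0] fun ψ => ‖ψ‖ ^ 2) (hPp : Pp φ = φ) (hPn : Pn φ = 0) (hφ : ‖φ‖ = 1) :
    ∃ t : ℝ, 0 < t ∧ 0 < action Pp Pn K (t • φ) := by
  have hlim : Tendsto (fun t : ℝ => t • φ) (𝓝[>] 0) (𝓝 0) :=
    ((continuous_id.smul continuous_const).tendsto' 0 0 (zero_smul ℝ φ)).mono_left
      nhdsWithin_le_nhds
  obtain ⟨t, hKt, ht⟩ :=
    ((hlim.eventually (hK.def (by norm_num : (0 : ℝ) < 1 / 4))).and self_mem_nhdsWithin).exists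
  refine ⟨t, ht, ?_⟩
  simp only [norm_smul, hφ, Real.norm_eq_abs, mul_one, abs_pow, sq_abs] at hKt
  simp only [action, map_smul, hPp, hPn, smul_zero, norm_zero, norm_smul, hφ, Real.norm_eq_abs,
    mul_one, sq_abs]
  nlinarith [le_abs_self (K (t • φ)), mul_pos ht ht]

end Action

namespace IsOrthogonalTriple

variable {E : Type*} [NormedAddCommGroup E] [InnerProductSpace ℝ E] {Pp P0 Pn : E →L[ℝ] E}
  {φ : E}

theorem apply_smul_add_add (hT : IsOrthogonalTriple Pp P0 Pn)
    (hφ : φ ∈ LinearMap.range (Pp : E →ₗ[ℝ] E)) (t : ℝ) {v w : E}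
    (hv : v ∈ LinearMap.range (P0 : E →ₗ[ℝ] E)) (hwp : Pp w = 0) (hw0 : P0 w = 0) :
    Pp (t • φ + v + w) = t • φ ∧ P0 (t • φ + v + w) = v ∧ Pn (t • φ + v + w) = w := by
  obtain ⟨x, rfl⟩ := hφ
  obtain ⟨y, rfl⟩ := hv
  have hwn : Pn w = w := by simpa [hwp, hw0] using hT.add_add_apply w
  simp [hT.apply_fst, hT.apply_snd, hT.rotate.apply_fst, hT.rotate.apply_thd,
    hT.rotate.rotate.apply_snd, hT.rotate.rotate.apply_thd, hwp, hw0, hwn]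

theorem mem_halfSpace_iff (hT : IsOrthogonalTriple Pp P0 Pn) {ψ : E} :
    ψ ∈ halfSpace Pp φ ↔ ∃ t : ℝ, 0 ≤ t ∧ ∃ v ∈ LinearMap.range (P0 : E →ₗ[ℝ] E),
      ∃ w, Pp w = 0 ∧ P0 w = 0 ∧ ψ = t • φ + v + w := by
  constructor
  · rintro ⟨t, ht, χ, hχ, rfl⟩
    have hχ' : χ = P0 χ + Pn χ := by simpa [hχ] using (hT.add_add_apply χ).symm
    refine ⟨t, ht, P0 χ, ⟨χ, rfl⟩, Pn χ, hT.apply_thd χ, hT.rotate.apply_snd χ, ?_⟩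
    rw [add_assoc, ← hχ']
  · rintro ⟨t, ht, v, hv, w, hwp, hw0, rfl⟩
    refine ⟨t, ht, v + w, ?_, add_assoc _ _ _⟩
    obtain ⟨y, rfl⟩ := hv
    simp [hT.apply_snd, hwp]

theorem action_smul_add_add (hT : IsOrthogonalTriple Pp P0 Pn)
    (hφ : φ ∈ LinearMap.range (Pp : E →ₗ[ℝ] E)) (hφn : ‖φ‖ = 1) (K : E → ℝ) (t : ℝ) {v w : E}
    (hv : v ∈ LinearMap.range (P0 : E →ₗ[ℝ] E)) (hwp : Pp w = 0) (hw0 : P0 w = 0) :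
    action Pp Pn K (t • φ + v + w) = t ^ 2 / 2 - (‖w‖ ^ 2 / 2 + K (t • φ + v + w)) := by
  obtain ⟨hp, -, hn⟩ := hT.apply_smul_add_add hφ t hv hwp hw0
  rw [action, hp, hn, norm_smul, hφn, mul_one, Real.norm_eq_abs, sq_abs]
  ring

theorem abs_le_norm_smul_add_add (hT : IsOrthogonalTriple Pp P0 Pn)
    (hφ : φ ∈ LinearMap.range (Pp : E →ₗ[ℝ] E)) (hφn : ‖φ‖ = 1) (t : ℝ) {v w : E}
    (hv : v ∈ LinearMap.range (P0 : E →ₗ[ℝ] E)) (hwp : Pp w = 0) (hw0 : P0 w = 0) :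
    |t| ≤ ‖t • φ + v + w‖ ∧ ‖v‖ ≤ ‖t • φ + v + w‖ := by
  obtain ⟨hp, h0, -⟩ := hT.apply_smul_add_add hφ t hv hwp hw0
  constructor
  · simpa [hp, norm_smul, hφn] using hT.norm_fst_le (t • φ + v + w)
  · simpa [h0] using hT.rotate.norm_fst_le (t • φ + v + w)

theorem exists_isMaxOn_action [CompleteSpace E] (hT : IsOrthogonalTriple Pp P0 Pn)
    [FiniteDimensional ℝ (LinearMap.range (P0 : E →ₗ[ℝ] E))]
    (hφ : φ ∈ LinearMap.range (Pp : E →ₗ[ℝ] E)) (hφn : ‖φ‖ = 1) {K : E → ℝ}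
    (hK : ConvexOn ℝ univ K) (hKc : Continuous K) (hK0 : ∀ ψ, 0 ≤ K ψ) {ψ₀ : E}
    (hψ₀ : ψ₀ ∈ halfSpace Pp φ) {R : ℝ}
    (hR : ∀ ψ ∈ halfSpace Pp φ, R ≤ ‖ψ‖ → action Pp Pn K ψ ≤ action Pp Pn K ψ₀) :
    ∃ ψs ∈ halfSpace Pp φ, IsMaxOn (action Pp Pn K) (halfSpace Pp φ) ψs := by
  set V := LinearMap.range (P0 : E →ₗ[ℝ] E)
  set N : Submodule ℝ E := LinearMap.ker (Pp : E →ₗ[ℝ] E) ⊓ LinearMap.ker (P0 : E →ₗ[ℝ] E)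
  let A : ℝ × V →ₗ[ℝ] E := (LinearMap.toSpanSingleton ℝ E φ).coprod V.subtype
  set G : ℝ × V → E → ℝ := fun x w => ‖w‖ ^ 2 / 2 + K (x.1 • φ + x.2 + w)
  have hG : ConvexOn ℝ univ fun p : (ℝ × V) × E => G p.1 p.2 := hK.norm_sq_div_two_add_comp A
  have hmin : ∀ x, ∃ w ∈ N, IsMinOn (G x) N w := fun x =>
    exists_isMinOn_norm_sq_div_two_add hK hKc hK0 (Pp.isClosed_ker.inter P0.isClosed_ker) _
  choose m hmN hm using hmin
  have hA : ∀ x : ℝ × V, ∀ w ∈ N, action Pp Pn K (x.1 • φ + x.2 + w) = x.1 ^ 2 / 2 - G x w ∧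
      ‖x‖ ≤ ‖x.1 • φ + x.2 + w‖ := by
    rintro x w ⟨hwp, hw0⟩
    obtain ⟨ht, hv⟩ := hT.abs_le_norm_smul_add_add hφ hφn x.1 x.2.2 hwp hw0
    exact ⟨hT.action_smul_add_add hφ hφn K x.1 x.2.2 hwp hw0, norm_prod_le_iff.2 ⟨ht, hv⟩⟩
  have hparam : ∀ ψ ∈ halfSpace Pp φ, ∃ x : ℝ × V, 0 ≤ x.1 ∧ ∃ w ∈ N,
      ψ = x.1 • φ + x.2 + w := by
    intro ψ hψ
    obtain ⟨t, ht, v, hv, w, hwp, hw0, rfl⟩ := hT.mem_halfSpace_iff.1 hψ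
    exact ⟨(t, ⟨v, hv⟩), ht, w, ⟨hwp, hw0⟩, rfl⟩
  have hmem : ∀ x : ℝ × V, 0 ≤ x.1 → ∀ w ∈ N, x.1 • φ + x.2 + w ∈ halfSpace Pp φ :=
    fun x hx w hw => hT.mem_halfSpace_iff.2 ⟨x.1, hx, x.2, x.2.2, w, hw.1, hw.2, rfl⟩
  obtain ⟨x₀, hx₀, w₀, hw₀, rfl⟩ := hparam ψ₀ hψ₀
  obtain ⟨x, hxS, hx⟩ := exists_forall_sub_le_of_isMinOn hG N.convex hmN hm
    (q := fun x => x.1 ^ 2 / 2) (by fun_prop) (isClosed_le continuous_const continuous_fst)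
    (x₀ := x₀) hx₀ hw₀ (R := R) fun y hy hyR w hw => by
      rw [← (hA y w hw).1, ← (hA x₀ w₀ hw₀).1]
      exact hR _ (hmem y hy w hw) (hyR.trans (hA y w hw).2)
  refine ⟨_, hmem x hxS (m x) (hmN x), fun ψ hψ => ?_⟩
  obtain ⟨y, hy, w, hw, rfl⟩ := hparam ψ hψ
  exact (hA y w hw).1.trans_le ((hx y hy w hw).trans_eq (hA x (m x) (hmN x)).1.symm)

end IsOrthogonalTriple

theorem stmt11_general (E : Type*) [NormedAddCommGroup E] [InnerProductSpace ℝ E] [CompleteSpace E]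
    (Pp P0 Pn : E →L[ℝ] E)
    (hsum : ∀ ψ : E, Pp ψ + P0 ψ + Pn ψ = ψ)
    (horth1 : ∀ ψ φ : E, inner ℝ (Pp ψ) (P0 φ) = (0:ℝ))
    (horth2 : ∀ ψ φ : E, inner ℝ (Pp ψ) (Pn φ) = (0:ℝ))
    (horth3 : ∀ ψ φ : E, inner ℝ (P0 ψ) (Pn φ) = (0:ℝ))
    (hfin : FiniteDimensional ℝ (LinearMap.range (P0 : E →ₗ[ℝ] E)))
    (K : E → ℝ) (DK : E → (E →L[ℝ] ℝ))
    (hderiv : ∀ ψ, HasFDerivAt K (DK ψ) ψ)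
    (hK0 : K 0 = 0)
    (hstrict : StrictConvexOn ℝ Set.univ K)
    (hpos : ∀ ψ : E, ψ ≠ 0 → 0 < K ψ)
    (twoStar C ε : ℝ) (h2 : 2 < twoStar) (hC : 0 < C) (hε' : ε < 1/2)
    (φ : E) (hφ : φ ∈ LinearMap.range (Pp : E →ₗ[ℝ] E)) (hφn : ‖φ‖ = 1)
    (hcoer : ∀ ψ : E, (∃ t : ℝ, ∃ χ : E, Pp χ = 0 ∧ ψ = t • φ + χ) →
        C * ‖ψ‖ ^ twoStar - ε * ‖ψ‖ ^ 2 ≤ K ψ)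
    (hsmall : (fun ψ : E => K ψ) =o[nhds 0] fun ψ : E => ‖ψ‖ ^ 2)
    (L : E → ℝ)
    (hL : ∀ ψ, L ψ = (1/2) * (‖Pp ψ‖ ^ 2 - ‖Pn ψ‖ ^ 2) - K ψ) :
    (∃ ψs : E, (∃ t : ℝ, 0 ≤ t ∧ ∃ χ : E, Pp χ = 0 ∧ ψs = t • φ + χ) ∧ 0 < L ψs ∧
        ∀ ψ : E, (∃ t : ℝ, 0 ≤ t ∧ ∃ χ : E, Pp χ = 0 ∧ ψ = t • φ + χ) → L ψ ≤ L ψs) ∧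
    (∃ R : ℝ, ∀ ψ : E, (∃ t : ℝ, 0 ≤ t ∧ ∃ χ : E, Pp χ = 0 ∧ ψ = t • φ + χ) →
        R ≤ ‖ψ‖ → L ψ ≤ 0) := by
  have hT : IsOrthogonalTriple Pp P0 Pn := ⟨hsum, horth1, horth2, horth3⟩
  obtain rfl : L = action Pp Pn K := funext hL
  have hKc : Continuous K := continuous_iff_continuousAt.2 fun ψ => (hderiv ψ).continuousAt
  have hK_nonneg : ∀ ψ, 0 ≤ K ψ := fun ψ =>
    (eq_or_ne ψ 0).elim (fun h => h ▸ hK0.ge) fun h => (hpos ψ h).le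
  obtain ⟨R, hR⟩ :=
    exists_action_nonpos_of_norm_ge (Pn := Pn) (K := K) hT.norm_fst_le hC h2 hε'.le
  have hR' : ∀ ψ ∈ halfSpace Pp φ, R ≤ ‖ψ‖ → action Pp Pn K ψ ≤ 0 :=
    fun ψ ⟨t, _, χ, hχ, hψ⟩ hψR => hR ψ hψR (hcoer ψ ⟨t, χ, hχ, hψ⟩)
  have hPpφ : Pp φ = φ := by obtain ⟨x, rfl⟩ := hφ; exact hT.apply_fst x
  have hPnφ : Pn φ = 0 := by obtain ⟨x, rfl⟩ := hφ; exact hT.rotate.rotate.apply_snd x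
  obtain ⟨t₀, ht₀, hpos₀⟩ := exists_pos_action_smul_pos hsmall hPpφ hPnφ hφn
  have ht₀_mem : t₀ • φ ∈ halfSpace Pp φ := ⟨t₀, ht₀.le, 0, map_zero Pp, (add_zero _).symm⟩
  obtain ⟨ψs, hψs, hmax⟩ := hT.exists_isMaxOn_action hφ hφn hstrict.convexOn hKc hK_nonneg
    ht₀_mem fun ψ hψ hψR => (hR' ψ hψ hψR).trans hpos₀.le
  exact ⟨⟨ψs, hψs, hpos₀.trans_le (hmax ht₀_mem), fun ψ hψ => hmax hψ⟩, R, hR'⟩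

theorem stmt11 (E : Type*) [NormedAddCommGroup E] [InnerProductSpace ℝ E] [CompleteSpace E]
    (Pp P0 Pn : E →L[ℝ] E)
    (hsum : ∀ ψ : E, Pp ψ + P0 ψ + Pn ψ = ψ)
    (horth1 : ∀ ψ φ : E, inner ℝ (Pp ψ) (P0 φ) = (0:ℝ))
    (horth2 : ∀ ψ φ : E, inner ℝ (Pp ψ) (Pn φ) = (0:ℝ))
    (horth3 : ∀ ψ φ : E, inner ℝ (P0 ψ) (Pn φ) = (0:ℝ))
    (hfin : FiniteDimensional ℝ (LinearMap.range (P0 : E →ₗ[ℝ] E)))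
    (K : E → ℝ) (DK : E → (E →L[ℝ] ℝ))
    (hderiv : ∀ ψ, HasFDerivAt K (DK ψ) ψ) (hDKcont : Continuous DK)
    (hK0 : K 0 = 0)
    (hstrict : StrictConvexOn ℝ Set.univ K)
    (hpos : ∀ ψ : E, ψ ≠ 0 → 0 < K ψ)
    (hAR : ∀ ψ : E, ψ ≠ 0 → 2 * K ψ < DK ψ ψ)
    (twoStar C ε : ℝ) (h2 : 2 < twoStar) (hC : 0 < C) (hε : 0 < ε) (hε' : ε < 1/2)
    (φ : E) (hφ : φ ∈ LinearMap.range (Pp : E →ₗ[ℝ] E)) (hφn : ‖φ‖ = 1)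
    (hcoer : ∀ ψ : E, (∃ t : ℝ, ∃ χ : E, Pp χ = 0 ∧ ψ = t • φ + χ) →
        C * ‖ψ‖ ^ twoStar - ε * ‖ψ‖ ^ 2 ≤ K ψ)
    (hsmall : (fun ψ : E => K ψ) =o[nhds 0] fun ψ : E => ‖ψ‖ ^ 2)
    (L : E → ℝ)
    (hL : ∀ ψ, L ψ = (1/2) * (‖Pp ψ‖ ^ 2 - ‖Pn ψ‖ ^ 2) - K ψ) :
    (∃ ψs : E, (∃ t : ℝ, 0 ≤ t ∧ ∃ χ : E, Pp χ = 0 ∧ ψs = t • φ + χ) ∧ 0 < L ψs ∧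
        ∀ ψ : E, (∃ t : ℝ, 0 ≤ t ∧ ∃ χ : E, Pp χ = 0 ∧ ψ = t • φ + χ) → L ψ ≤ L ψs) ∧
    (∃ R : ℝ, ∀ ψ : E, (∃ t : ℝ, 0 ≤ t ∧ ∃ χ : E, Pp χ = 0 ∧ ψ = t • φ + χ) →
        R ≤ ‖ψ‖ → L ψ ≤ 0) :=
  stmt11_general E Pp P0 Pn hsum horth1 horth2 horth3 hfin K DK hderiv hK0 hstrict hpos twoStar C ε
    h2 hC hε' φ hφ hφn hcoer hsmall L hL
end

section
/- Let m ≥ 2, 2* = 2m/(m-1), and let u, v be elements of a complex inner product space with |u − v| denoting norms. Then for the function Φ(w) = (1/2*)|w|^{2*}, and any w ≠ 0, the second-order Taylor quantity satisfies: (Φ''(w)[w,w] − Φ'(w)[w]) + 2(Φ''(w)[w,z] − Φ'(w)[z]) + Φ''(w)[z,z] ≥ (2/(m+1))·|w|^{2*} for every z, where Φ'(w)[z] = |w|^{2*-2}·Re⟨w,z⟩ and Φ''(w)[z₁,z₂] = |w|^{2*-2}·Re⟨z₁,z₂⟩ + (2*−2)·|w|^{2*-4}·Re⟨w,z₁⟩·Re⟨w,z₂⟩.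 -/
/-!
Write `t = ‖w‖`, `a = Re ⟪w, z⟫` and `p = q - 2`. On the left, the terms in `w` alone
and the mixed terms collapse to `p t^q + 2 p t^(q-2) a`, and Cauchy–Schwarz `a² ≤ t² ‖z‖²`
bounds `Φ''(w)[z, z]` below by `(p + 1) t^(q-4) a²`. What remains is `t^(q-4)` times a
quadratic in `a` with leading coefficient `p + 1 > 0`, whose minimum is `p / (p + 1) · t⁴`;
for `q = 2m / (m - 1)` the constant `p / (p + 1)` is `2 / (m + 1)`.
-/

theorem Real.rpow_sub_ofNat {x : ℝ} (hx : x ≠ 0) (y : ℝ) (n : ℕ) [n.AtLeastTwo] :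
    x ^ (y - OfNat.ofNat n) = x ^ y / x ^ (OfNat.ofNat n : ℕ) := by
  exact_mod_cast Real.rpow_sub_natCast hx y n

theorem div_add_one_mul_sq_le {p : ℝ} (hp : 0 < p + 1) (x a : ℝ) :
    p / (p + 1) * x ^ 2 ≤ p * x ^ 2 + 2 * p * x * a + (p + 1) * a ^ 2 := by
  have completed_square : p * x ^ 2 + 2 * p * x * a + (p + 1) * a ^ 2 - p / (p + 1) * x ^ 2
      = (p + 1) * (a + p / (p + 1) * x) ^ 2 := by
    field_simp
    ring
  rw [← sub_nonneg, completed_square]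
  exact mul_nonneg hp.le (sq_nonneg _)

section PowNorm

variable {E : Type*} [NormedAddCommGroup E] [InnerProductSpace ℂ E]

theorem re_inner_self (w : E) : (inner ℂ w w).re = ‖w‖ ^ 2 :=
  inner_self_eq_norm_sq (𝕜 := ℂ) w

theorem sq_re_inner_le (w z : E) : (inner ℂ w z).re ^ 2 ≤ ‖w‖ ^ 2 * ‖z‖ ^ 2 := by
  rw [← mul_pow, ← sq_abs]
  gcongr
  exact (Complex.abs_re_le_norm _).trans (norm_inner_le_norm w z)

-- `Φ'(w)[z]` and `Φ''(w)[z₁, z₂]` for `Φ(w) = ‖w‖^q / q`, valid at `w ≠ 0`.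
noncomputable def powNormDeriv (q : ℝ) (w z : E) : ℝ :=
  ‖w‖ ^ (q - 2) * (inner ℂ w z).re

noncomputable def powNormDeriv2 (q : ℝ) (w z₁ z₂ : E) : ℝ :=
  ‖w‖ ^ (q - 2) * (inner ℂ z₁ z₂).re
    + (q - 2) * ‖w‖ ^ (q - 4) * (inner ℂ w z₁).re * (inner ℂ w z₂).re

variable {w : E} (q : ℝ)

theorem powNormDeriv_self (hw : w ≠ 0) : powNormDeriv q w w = ‖w‖ ^ q := by
  have hw' : ‖w‖ ≠ 0 := norm_ne_zero_iff.mpr hw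
  rw [powNormDeriv, re_inner_self, Real.rpow_sub_ofNat hw']
  field_simp

theorem powNormDeriv2_self_self (hw : w ≠ 0) : powNormDeriv2 q w w w = (q - 1) * ‖w‖ ^ q := by
  have hw' : ‖w‖ ≠ 0 := norm_ne_zero_iff.mpr hw
  simp only [powNormDeriv2, re_inner_self, Real.rpow_sub_ofNat hw']
  field_simp
  ring

theorem powNormDeriv2_self_left (hw : w ≠ 0) (z : E) :
    powNormDeriv2 q w w z = (q - 1) * powNormDeriv q w z := by
  have hw' : ‖w‖ ≠ 0 := norm_ne_zero_iff.mpr hw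
  simp only [powNormDeriv2, powNormDeriv, re_inner_self, Real.rpow_sub_ofNat hw']
  field_simp
  ring

theorem powNormDeriv2_diag_ge (hw : w ≠ 0) (z : E) :
    (q - 1) * (‖w‖ ^ q / ‖w‖ ^ 4) * (inner ℂ w z).re ^ 2 ≤ powNormDeriv2 q w z z := by
  have hw' : 0 < ‖w‖ := norm_pos_iff.mpr hw
  have hCS := sq_re_inner_le w z
  simp only [powNormDeriv2, re_inner_self, Real.rpow_sub_ofNat hw'.ne']
  have hP : 0 ≤ ‖w‖ ^ q / ‖w‖ ^ 4 := by positivity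
  have hsplit : ‖w‖ ^ q / ‖w‖ ^ 2 = ‖w‖ ^ q / ‖w‖ ^ 4 * ‖w‖ ^ 2 := by field_simp
  rw [hsplit]
  nlinarith [mul_le_mul_of_nonneg_left hCS hP]

theorem powNormDeriv_taylor_ge (hq : 1 < q) (hw : w ≠ 0) (z : E) :
    (q - 2) / (q - 1) * ‖w‖ ^ q ≤
      (powNormDeriv2 q w w w - powNormDeriv q w w)
        + 2 * (powNormDeriv2 q w w z - powNormDeriv q w z) + powNormDeriv2 q w z z := by
  have hw' : 0 < ‖w‖ := norm_pos_iff.mpr hw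
  set P := ‖w‖ ^ q / ‖w‖ ^ 4
  set a := (inner ℂ w z).re
  have hP : 0 < P := by positivity
  have hquad := div_add_one_mul_sq_le (p := q - 2) (by linarith) (‖w‖ ^ 2) a
  rw [powNormDeriv2_self_self q hw, powNormDeriv_self q hw, powNormDeriv2_self_left q hw]
  calc (q - 2) / (q - 1) * ‖w‖ ^ q = P * ((q - 2) / (q - 2 + 1) * (‖w‖ ^ 2) ^ 2) := by
        rw [show q - 2 + 1 = q - 1 by ring]
        simp only [P]
        field_simp
    _ ≤ P * ((q - 2) * (‖w‖ ^ 2) ^ 2 + 2 * (q - 2) * ‖w‖ ^ 2 * a + (q - 2 + 1) * a ^ 2) := by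
        gcongr
    _ = ((q - 1) * ‖w‖ ^ q - ‖w‖ ^ q) + 2 * ((q - 1) * powNormDeriv q w z - powNormDeriv q w z)
          + (q - 1) * P * a ^ 2 := by
        simp only [powNormDeriv, Real.rpow_sub_ofNat hw'.ne', P, a]
        field_simp
        ring
    _ ≤ _ := by
        gcongr
        exact powNormDeriv2_diag_ge q hw z

end PowNorm

theorem stmt16 (m : ℕ) (hm : 2 ≤ m)
    (E : Type*) [NormedAddCommGroup E] [InnerProductSpace ℂ E]
    (q : ℝ) (hq : q = 2 * (m:ℝ) / ((m:ℝ) - 1))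
    (w z : E) (hw : w ≠ 0)
    (B : E → ℝ) (hB : ∀ z₁ : E, B z₁ = ‖w‖ ^ (q - 2) * (inner ℂ w z₁ : ℂ).re)
    (A : E → E → ℝ)
    (hA : ∀ z₁ z₂ : E, A z₁ z₂ = ‖w‖ ^ (q - 2) * (inner ℂ z₁ z₂ : ℂ).re
        + (q - 2) * ‖w‖ ^ (q - 4) * (inner ℂ w z₁ : ℂ).re * (inner ℂ w z₂ : ℂ).re) :
    (A w w - B w) + 2 * (A w z - B z) + A z z ≥ 2 / ((m:ℝ) + 1) * ‖w‖ ^ q := by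
  have hm' : (2 : ℝ) ≤ m := by exact_mod_cast hm
  have hm1 : (0 : ℝ) < m - 1 := by linarith
  have hq_gt : 1 < q := by
    rw [hq, lt_div_iff₀ hm1]
    linarith
  have hcoeff : 2 / ((m : ℝ) + 1) = (q - 2) / (q - 1) := by
    rw [div_eq_div_iff (by linarith) (by linarith), hq]
    field_simp
    ring
  obtain rfl : A = powNormDeriv2 q w := funext₂ hA
  obtain rfl : B = powNormDeriv q w := funext hB
  rw [hcoeff]
  exact powNormDeriv_taylor_ge q hq_gt hw z
end
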